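/- Let μ and ν be probability measures on ℝ with all moments finite. Let (m_n)_{n≥0} be the sequence m_n = (\hat{μ}⋆\hat{ν})((X′)^n) (so m_0 = 1), and let (b_n)_{n≥1} be its boolean cumulants. Then for every n ≥ 1, b_n equals the sum of the n-th boolean cumulant of the moment sequence (μ_k)_{k≥0} of μ and the n-th boolean cumulant of the moment sequence (ν_k)_{k≥0} of ν; i.e., the moments of the filtered convolution restricted to powers of X′ are the moments of the boolean convolution μ⊎ν. -/

import Mathlib

open scoped TensorProduct

/-- The two-letter alphabet `{z, w}`. -/
inductive Letter | z | w
deriving DecidableEq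

/-- Words: elements of the free monoid `S = FS({z,w})`. -/
abbrev Word := List Letter

/-- The three generators `X, X', P` of the algebra `B`. -/
inductive Gen | X | X' | P
deriving DecidableEq, BEq

/-- The free unital associative `ℂ`-algebra on the generators `X, X', P`. -/
abbrev B := FreeAlgebra ℂ Gen

/-- `X(z) = X`, `X(w) = X'`. -/
noncomputable def Xletter (l : Letter) : B :=
  FreeAlgebra.ι ℂ (match l with | .z => Gen.X | .w => Gen.X')

/-- `X(t) = X(t₁) ⋯ X(t_r)` for a word `t ∈ S`. -/
noncomputable def Xword (t : Word) : B := (t.map Xletter).prod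

/-- The projection generator `P`. -/
noncomputable def Pgen : B := FreeAlgebra.ι ℂ Gen.P

/-- Value of the functional `\hat μ` (built from the moment sequence `m`, `m 0 = 1`)
on a basis word of `B`: split the word into maximal `P`-free blocks and take the
product of `m (length of block)`. -/
def wordVal (m : ℕ → ℂ) (l : List Gen) : ℂ :=
  ((l.splitOn Gen.P).map (fun t => if t = [] then 1 else m t.length)).prod

/-- The linear functional `\hat μ : B → ℂ` associated with a moment sequence `m`. -/
noncomputable def hatL (m : ℕ → ℂ) : B →ₗ[ℂ] ℂ :=
  (Finsupp.linearCombination ℂ (fun x : FreeMonoid Gen => wordVal m (FreeMonoid.toList x))).comp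
    ((MonoidAlgebra.coeffLinearEquiv ℂ : MonoidAlgebra ℂ (FreeMonoid Gen) ≃ₗ[ℂ] (FreeMonoid Gen →₀ ℂ)).toLinearMap.comp
    (FreeAlgebra.equivMonoidAlgebraFreeMonoid : B ≃ₐ[ℂ] MonoidAlgebra ℂ (FreeMonoid Gen)).toLinearMap)

/-- The coproduct `Δ : B → B ⊗ B`, `Δ X = X⊗1 + 1⊗X`, `Δ X' = X'⊗P + P⊗X'`, `Δ P = P⊗P`. -/
noncomputable def Cop : B →ₐ[ℂ] B ⊗[ℂ] B :=
  FreeAlgebra.lift ℂ (fun g : Gen => match g with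
    | .X => FreeAlgebra.ι ℂ Gen.X ⊗ₜ[ℂ] 1 + 1 ⊗ₜ[ℂ] FreeAlgebra.ι ℂ Gen.X
    | .X' => FreeAlgebra.ι ℂ Gen.X' ⊗ₜ[ℂ] Pgen + Pgen ⊗ₜ[ℂ] FreeAlgebra.ι ℂ Gen.X'
    | .P => Pgen ⊗ₜ[ℂ] Pgen)

/-- The functional `φ ⊗ ψ` on `B ⊗ B`. -/
noncomputable def tensorFunc (φ ψ : B →ₗ[ℂ] ℂ) : B ⊗[ℂ] B →ₗ[ℂ] ℂ :=
  (LinearMap.mul' ℂ ℂ).comp (TensorProduct.map φ ψ)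

/-- The filtered convolution `φ ⋆ ψ = (φ ⊗ ψ) ∘ Δ`. -/
noncomputable def filtConv (φ ψ : B →ₗ[ℂ] ℂ) : B →ₗ[ℂ] ℂ :=
  (tensorFunc φ ψ).comp Cop.toLinearMap

/-- The `n`-th moment of a measure on `ℝ`, as a complex number. -/
noncomputable def mom (μ : MeasureTheory.Measure ℝ) (n : ℕ) : ℂ :=
  ((∫ x, x ^ n ∂μ : ℝ) : ℂ)


/-- `b` is the sequence of boolean cumulants of the sequence `m` (with `m 0 = 1`):
`m n = Σ_{k=1}^{n} b k * m (n-k)` for `n ≥ 1`. -/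
def IsBooleanCumulants (m b : ℕ → ℂ) : Prop :=
  ∀ n : ℕ, 1 ≤ n → m n = ∑ k ∈ Finset.Icc 1 n, b k * m (n - k)

/-!
Write `Δ(X'ⁿ) = (X'⊗P + P⊗X')ⁿ` as a sum of words in `X'⊗P` and `P⊗X'`. Since
`\hat μ (x P y) = \hat μ x · \hat μ y`, the functional `\hat μ ⊗ \hat ν` takes on such a word
the product of `μ_k` over its maximal runs of `X'⊗P` and of `ν_k` over its maximal runs of `P⊗X'`.
Let `M`, `M_μ`, `M_ν` be the moment series and `U`, `V` the series of the words beginning with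
`X'⊗P`, resp. `P⊗X'`. Splitting off the first letter, resp. the initial run of `X'⊗P` or of
`P⊗X'`, gives `M = 1 + U + V = M_μ (1 + V) = M_ν (1 + U)`. Together with `M_μ = 1 + B_μ M_μ`
(`B_μ` the boolean cumulant series of `μ`) this yields `B_μ M = U`, likewise `B_ν M = V`, hence `M = 1 + (B_μ + B_ν) M`, an equation that
determines the boolean cumulants of `M`.
-/

open PowerSeries
open FreeAlgebra (basisFreeMonoid)

theorem basisFreeMonoid_eq_lift (w : FreeMonoid Gen) :
    basisFreeMonoid ℂ Gen w = FreeMonoid.lift (FreeAlgebra.ι ℂ) w := by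
  simp [basisFreeMonoid, FreeAlgebra.equivMonoidAlgebraFreeMonoid]

theorem wordVal_append_P (m : ℕ → ℂ) (l l' : List Gen) :
    wordVal m (l ++ Gen.P :: l') = wordVal m l * wordVal m l' := by
  simp [wordVal, List.splitOn_append_cons_of_beq l l' (rfl : (Gen.P == Gen.P) = true)]

section hatL

variable (m : ℕ → ℂ)

theorem hatL_basisFreeMonoid (w : FreeMonoid Gen) :
    hatL m (basisFreeMonoid ℂ Gen w) = wordVal m w.toList := by
  simp [hatL, basisFreeMonoid]

theorem hatL_basisFreeMonoid_mul_Pgen_mul (v w : FreeMonoid Gen) :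
    hatL m (basisFreeMonoid ℂ Gen v * Pgen * basisFreeMonoid ℂ Gen w) =
      hatL m (basisFreeMonoid ℂ Gen v) * hatL m (basisFreeMonoid ℂ Gen w) := by
  have : basisFreeMonoid ℂ Gen v * Pgen * basisFreeMonoid ℂ Gen w =
      basisFreeMonoid ℂ Gen (v * FreeMonoid.of Gen.P * w) := by
    simp [basisFreeMonoid_eq_lift, Pgen]
  rw [this, hatL_basisFreeMonoid, hatL_basisFreeMonoid, hatL_basisFreeMonoid]
  simpa using wordVal_append_P m v.toList w.toList

theorem hatL_mul_Pgen_mul (x y : B) : hatL m (x * Pgen * y) = hatL m x * hatL m y := by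
  have hleft (v : FreeMonoid Gen) :
      hatL m ∘ₗ LinearMap.mulLeft ℂ (basisFreeMonoid ℂ Gen v * Pgen) =
        hatL m (basisFreeMonoid ℂ Gen v) • hatL m :=
    (basisFreeMonoid ℂ Gen).ext fun w => by
      simpa [mul_assoc] using hatL_basisFreeMonoid_mul_Pgen_mul m v w
  have hright : hatL m ∘ₗ LinearMap.mulRight ℂ (Pgen * y) = hatL m y • hatL m :=
    (basisFreeMonoid ℂ Gen).ext fun v => by
      simpa [mul_assoc, mul_comm] using LinearMap.congr_fun (hleft v) y
  simpa [mul_assoc, mul_comm] using LinearMap.congr_fun hright x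

theorem hatL_one : hatL m 1 = 1 := by
  simpa [basisFreeMonoid_eq_lift, wordVal] using hatL_basisFreeMonoid m 1

theorem hatL_Pgen_pow_mul (k : ℕ) (y : B) : hatL m (Pgen ^ k * y) = hatL m y := by
  induction k with
  | zero => simp
  | succ k ih =>
    have := hatL_mul_Pgen_mul m 1 (Pgen ^ k * y)
    rwa [one_mul, hatL_one, one_mul, ih, ← mul_assoc, ← pow_succ'] at this

theorem hatL_X'_pow (hm0 : m 0 = 1) (k : ℕ) : hatL m (FreeAlgebra.ι ℂ Gen.X' ^ k) = m k := by
  have : FreeAlgebra.ι ℂ Gen.X' ^ k =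
      basisFreeMonoid ℂ Gen (FreeMonoid.ofList (List.replicate k Gen.X')) := by
    simp [basisFreeMonoid_eq_lift, FreeMonoid.lift_ofList]
  rw [this, hatL_basisFreeMonoid, FreeMonoid.toList_ofList]
  rcases k with _ | k
  · simpa [wordVal] using hm0.symm
  · simp [wordVal, List.splitOn_eq_singleton_of_beq_eq_false (a := Gen.P)
      (xs := List.replicate (k + 1) Gen.X') (by simp; rfl)]

end hatL

theorem add_pow_succ_eq_pow_add_sum {R : Type*} [Semiring R] (a c : R) (n : ℕ) :
    (a + c) ^ (n + 1) =
      a ^ (n + 1) + ∑ i ∈ Finset.range (n + 1), a ^ i * (c * (a + c) ^ (n - i)) := by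
  induction n with
  | zero => simp
  | succ n ih =>
    rw [pow_succ' (a + c) (n + 1), add_mul]
    nth_rewrite 1 [ih]
    rw [Finset.sum_range_succ' _ (n + 1), mul_add, Finset.mul_sum]
    simp only [← mul_assoc, ← pow_succ', Nat.add_sub_add_right, pow_zero, one_mul]
    abel

noncomputable def xP : B ⊗[ℂ] B := FreeAlgebra.ι ℂ Gen.X' ⊗ₜ Pgen

noncomputable def pX : B ⊗[ℂ] B := Pgen ⊗ₜ FreeAlgebra.ι ℂ Gen.X'

theorem Cop_ι_X' : Cop (FreeAlgebra.ι ℂ Gen.X') = xP + pX := by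
  simp [Cop, xP, pX]

theorem comm_xP : Algebra.TensorProduct.comm ℂ B B xP = pX := rfl

theorem comm_pX : Algebra.TensorProduct.comm ℂ B B pX = xP := rfl

theorem xP_pow (k : ℕ) : xP ^ k = (FreeAlgebra.ι ℂ Gen.X' ^ k) ⊗ₜ[ℂ] (Pgen ^ k) :=
  Algebra.TensorProduct.tmul_pow _ _ _

theorem tensorFunc_tmul (φ ψ : B →ₗ[ℂ] ℂ) (x y : B) :
    tensorFunc φ ψ (x ⊗ₜ y) = φ x * ψ y := rfl

theorem tensorFunc_comm (φ ψ : B →ₗ[ℂ] ℂ) (z : B ⊗[ℂ] B) :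
    tensorFunc φ ψ (Algebra.TensorProduct.comm ℂ B B z) = tensorFunc ψ φ z := by
  induction z using TensorProduct.induction_on with
  | zero => simp
  | tmul x y => simp [tensorFunc_tmul, mul_comm]
  | add z z' hz hz' => simp only [map_add, hz, hz']

theorem Cop_cocomm :
    (Algebra.TensorProduct.comm ℂ B B : B ⊗[ℂ] B →ₐ[ℂ] B ⊗[ℂ] B).comp Cop = Cop := by
  ext g
  cases g <;> simp [Cop, add_comm]

theorem filtConv_comm (φ ψ : B →ₗ[ℂ] ℂ) : filtConv φ ψ = filtConv ψ φ := by
  ext x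
  conv_rhs => rw [filtConv, LinearMap.comp_apply, AlgHom.toLinearMap_apply, ← Cop_cocomm]
  exact (tensorFunc_comm ψ φ _).symm

section tensorFunc_hatL

variable (mt mf : ℕ → ℂ) (hmt0 : mt 0 = 1)
include hmt0

theorem tensorFunc_hatL_xP_pow (k : ℕ) : tensorFunc (hatL mt) (hatL mf) (xP ^ k) = mt k := by
  rw [xP_pow, tensorFunc_tmul, hatL_X'_pow mt hmt0, ← mul_one (Pgen ^ k), hatL_Pgen_pow_mul,
    hatL_one, mul_one]

theorem tensorFunc_hatL_xP_pow_mul_pX_mul (k : ℕ) (z : B ⊗[ℂ] B) :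
    tensorFunc (hatL mt) (hatL mf) (xP ^ k * (pX * z)) =
      mt k * tensorFunc (hatL mt) (hatL mf) (pX * z) := by
  induction z using TensorProduct.induction_on with
  | zero => simp
  | tmul x y =>
    have hPx : hatL mt (Pgen * x) = hatL mt x := by simpa using hatL_Pgen_pow_mul mt 1 x
    rw [xP_pow, pX, Algebra.TensorProduct.tmul_mul_tmul, Algebra.TensorProduct.tmul_mul_tmul,
      tensorFunc_tmul, tensorFunc_tmul, ← mul_assoc _ Pgen x, hatL_mul_Pgen_mul,
      hatL_X'_pow mt hmt0, hatL_Pgen_pow_mul, hPx, mul_assoc]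
  | add z z' hz hz' => simp only [mul_add, map_add, hz, hz']

end tensorFunc_hatL

noncomputable def rightFirstMoment (φ ψ : B →ₗ[ℂ] ℂ) (n : ℕ) : ℂ :=
  tensorFunc φ ψ (pX * (xP + pX) ^ n)

theorem filtConv_X'_pow (φ ψ : B →ₗ[ℂ] ℂ) (n : ℕ) :
    filtConv φ ψ (FreeAlgebra.ι ℂ Gen.X' ^ n) = tensorFunc φ ψ ((xP + pX) ^ n) := by
  simp [filtConv, Cop_ι_X']

theorem filtConv_X'_pow_succ (φ ψ : B →ₗ[ℂ] ℂ) (n : ℕ) :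
    filtConv φ ψ (FreeAlgebra.ι ℂ Gen.X' ^ (n + 1)) =
      rightFirstMoment ψ φ n + rightFirstMoment φ ψ n := by
  rw [filtConv_X'_pow, pow_succ', add_mul, map_add, rightFirstMoment, rightFirstMoment,
    ← tensorFunc_comm ψ φ]
  simp [comm_xP, comm_pX, add_comm]

theorem filtConv_hatL_X'_pow_succ (mt mf : ℕ → ℂ) (hmt0 : mt 0 = 1) (n : ℕ) :
    filtConv (hatL mt) (hatL mf) (FreeAlgebra.ι ℂ Gen.X' ^ (n + 1)) =
      mt (n + 1) +
        ∑ i ∈ Finset.range (n + 1), mt i * rightFirstMoment (hatL mt) (hatL mf) (n - i) := by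
  simp only [filtConv_X'_pow, add_pow_succ_eq_pow_add_sum, map_add, map_sum,
    tensorFunc_hatL_xP_pow mt mf hmt0, tensorFunc_hatL_xP_pow_mul_pX_mul mt mf hmt0,
    rightFirstMoment]

theorem PowerSeries.coeff_mk_mul_mk {R : Type*} [CommSemiring R] (f g : ℕ → R) (n : ℕ) :
    coeff n (mk f * mk g) = ∑ i ∈ Finset.range (n + 1), f i * g (n - i) := by
  rw [coeff_mul, Finset.Nat.sum_antidiagonal_eq_sum_range_succ_mk]
  simp

theorem mk_filtConv_hatL_X'_pow_eq_add (mt mf : ℕ → ℂ) :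
    mk (fun n => filtConv (hatL mt) (hatL mf) (FreeAlgebra.ι ℂ Gen.X' ^ n)) =
      1 + X * mk (rightFirstMoment (hatL mf) (hatL mt)) +
        X * mk (rightFirstMoment (hatL mt) (hatL mf)) := by
  ext (_ | n)
  · simp [filtConv_X'_pow, Algebra.TensorProduct.one_def, tensorFunc_tmul, hatL_one]
  · simp [filtConv_X'_pow_succ, coeff_succ_X_mul]

theorem mk_filtConv_hatL_X'_pow_eq_mul (mt mf : ℕ → ℂ) (hmt0 : mt 0 = 1) :
    mk (fun n => filtConv (hatL mt) (hatL mf) (FreeAlgebra.ι ℂ Gen.X' ^ n)) =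
      mk mt * (1 + X * mk (rightFirstMoment (hatL mt) (hatL mf))) := by
  ext (_ | n)
  · simp [filtConv_X'_pow, Algebra.TensorProduct.one_def, tensorFunc_tmul, hatL_one, hmt0]
  · rw [mul_add, mul_one, mul_left_comm, map_add, coeff_succ_X_mul, coeff_mk_mul_mk,
      coeff_mk, coeff_mk, filtConv_hatL_X'_pow_succ mt mf hmt0]

theorem eq_one_add_add_mul_of_eq_mul_one_add {R : Type*} [CommRing R] {M U V Mμ Mν Bμ Bν : R}
    (hM : M = 1 + U + V) (hMμ : M = Mμ * (1 + V)) (hMν : M = Mν * (1 + U))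
    (hBμ : Mμ = 1 + Bμ * Mμ) (hBν : Mν = 1 + Bν * Mν) : M = 1 + (Bμ + Bν) * M := by
  linear_combination (-1) * hM + (1 - Bμ) * hMμ + (1 + V) * hBμ + (1 - Bν) * hMν + (1 + U) * hBν

theorem eq_of_eq_one_add_mul_of_eq_one_add_mul {R : Type*} [CommRing R] [IsDomain R]
    {M B₁ B₂ : R} (h₁ : M = 1 + B₁ * M) (h₂ : M = 1 + B₂ * M) : B₁ = B₂ := by
  have hM : M ≠ 0 := by
    rintro rfl
    simp at h₁
  exact mul_right_cancel₀ hM (by linear_combination h₂ - h₁)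

theorem mk_filtConv_hatL_X'_pow {mt mf : ℕ → ℂ} {Bμ Bν : PowerSeries ℂ}
    (hmt : mk mt = 1 + Bμ * mk mt) (hmf : mk mf = 1 + Bν * mk mf) (hmt0 : mt 0 = 1)
    (hmf0 : mf 0 = 1) :
    mk (fun n => filtConv (hatL mt) (hatL mf) (FreeAlgebra.ι ℂ Gen.X' ^ n)) =
      1 + (Bμ + Bν) * mk (fun n => filtConv (hatL mt) (hatL mf) (FreeAlgebra.ι ℂ Gen.X' ^ n)) := by
  refine eq_one_add_add_mul_of_eq_mul_one_add (mk_filtConv_hatL_X'_pow_eq_add mt mf)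
    (mk_filtConv_hatL_X'_pow_eq_mul mt mf hmt0) ?_ hmt hmf
  rw [filtConv_comm (hatL mt) (hatL mf)]
  exact mk_filtConv_hatL_X'_pow_eq_mul mf mt hmf0

theorem IsBooleanCumulants.mk_eq {m b : ℕ → ℂ} (hb : IsBooleanCumulants m b) (hm0 : m 0 = 1) :
    mk m = 1 + X * mk (fun n => b (n + 1)) * mk m := by
  ext (_ | n)
  · simp [hm0]
  · rw [map_add, mul_assoc, coeff_succ_X_mul, coeff_mk_mul_mk, coeff_one, if_neg n.succ_ne_zero,
      zero_add, coeff_mk, hb (n + 1) n.succ_pos, ← Finset.Ico_add_one_right_eq_Icc,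
      Finset.sum_Ico_eq_sum_range]
    simp [add_comm]

theorem mom_zero (μ : MeasureTheory.Measure ℝ) [MeasureTheory.IsProbabilityMeasure μ] :
    mom μ 0 = 1 := by
  simp [mom]

theorem filtConv_boolean_general (μ ν : MeasureTheory.Measure ℝ)
    [MeasureTheory.IsProbabilityMeasure μ] [MeasureTheory.IsProbabilityMeasure ν]
    (m b bμ bν : ℕ → ℂ)
    (hm : ∀ n : ℕ, m n = filtConv (hatL (mom μ)) (hatL (mom ν)) (FreeAlgebra.ι ℂ Gen.X' ^ n))
    (hb : IsBooleanCumulants m b)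
    (hbμ : IsBooleanCumulants (mom μ) bμ)
    (hbν : IsBooleanCumulants (mom ν) bν)
    (n : ℕ) (hn : 1 ≤ n) :
    b n = bμ n + bν n := by
  have hM : mk m = 1 + (X * mk (fun k => bμ (k + 1)) + X * mk (fun k => bν (k + 1))) * mk m := by
    rw [funext hm]
    exact mk_filtConv_hatL_X'_pow (hbμ.mk_eq (mom_zero μ)) (hbν.mk_eq (mom_zero ν))
      (mom_zero μ) (mom_zero ν)
  have hm0 : m 0 = 1 := by simpa using congrArg (coeff 0) hM
  have hB := eq_of_eq_one_add_mul_of_eq_one_add_mul (hb.mk_eq hm0) hM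
  obtain ⟨k, rfl⟩ := Nat.exists_eq_add_of_le' hn
  simpa [coeff_succ_X_mul] using congrArg (coeff (k + 1)) hB

/-- the moments of the filtered convolution restricted to powers of `X'`
are the moments of the boolean convolution `μ ⊎ ν`: the boolean cumulants add. -/
theorem filtConv_boolean (μ ν : MeasureTheory.Measure ℝ)
    [MeasureTheory.IsProbabilityMeasure μ] [MeasureTheory.IsProbabilityMeasure ν]
    (hμ : ∀ n : ℕ, MeasureTheory.Integrable (fun x => x ^ n) μ)
    (hν : ∀ n : ℕ, MeasureTheory.Integrable (fun x => x ^ n) ν)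
    (m b bμ bν : ℕ → ℂ)
    (hm : ∀ n : ℕ, m n = filtConv (hatL (mom μ)) (hatL (mom ν)) (FreeAlgebra.ι ℂ Gen.X' ^ n))
    (hb : IsBooleanCumulants m b)
    (hbμ : IsBooleanCumulants (mom μ) bμ)
    (hbν : IsBooleanCumulants (mom ν) bν)
    (n : ℕ) (hn : 1 ≤ n) :
    b n = bμ n + bν n :=
  filtConv_boolean_general μ ν m b bμ bν hm hb hbμ hbν n hn
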